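/- arXiv:2002.09153 — 5 statements merged into one kernel-verified Lean document; each statement's English description precedes it below -/
import Mathlib

section
/- For an arc-length parametrized curve f with unit tangent τ, the density M₁(f) = ‖τ(s1)−τ(s2)‖²/(2‖Δf‖²) satisfies, for 0 < |s1−s2| (and f embedded so Δf ≠ 0): 2M₁(f) = 2M₀(f) − 2 ∂²X/(∂s1∂s2) + (∂X/∂s1)(∂X/∂s2) + (2/Δs)(∂X/∂s1 − ∂X/∂s2), where M₀(f) = (1 − cos φ)/‖Δf‖² with cos φ = (‖Δf‖²/2)·∂²/(∂s1∂s2) log‖Δf‖², and X = log(|Δs|²/‖Δf‖²). -/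
/-!
Every derivative in the identity is explicit in `τ(s1)`, `τ(s2)` and the chord `Δf`. Writing
`L = log ‖Δf‖²`, we have `X = log Δs² - L`, and the contributions of `log Δs²` cancel
identically, leaving
`2M₀ + 2 ∂₁∂₂L + ∂₁L ∂₂L = (2 + ∂₁∂₂‖Δf‖²) / ‖Δf‖² = (2 - 2⟪τ(s1), τ(s2)⟫) / ‖Δf‖²`,
which is `‖τ(s1) - τ(s2)‖² / ‖Δf‖²` because `τ` is a unit vector.
-/

open Real Topology
open scoped RealInnerProductSpace

section ChordCalculus

variable {E : Type*} [NormedAddCommGroup E] [InnerProductSpace ℝ E] {f : ℝ → E} {a b : ℝ}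

theorem hasDerivAt_log_norm_sub_sq_right (hb : DifferentiableAt ℝ f b) (hab : f a ≠ f b) :
    HasDerivAt (fun t => log (‖f a - f t‖ ^ 2))
      (-2 * ⟪f a - f b, deriv f b⟫ / ‖f a - f b‖ ^ 2) b := by
  have h := (hb.hasDerivAt.const_sub (f a)).norm_sq.log (by simpa [sub_eq_zero] using hab)
  convert h using 1
  rw [inner_neg_right]
  ring

theorem hasDerivAt_log_sq_sub_div_norm_sub_sq_right (hb : DifferentiableAt ℝ f b)
    (hab : a ≠ b) (hfab : f a ≠ f b) :
    HasDerivAt (fun t => log ((a - t) ^ 2 / ‖f a - f t‖ ^ 2))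
      (-2 / (a - b) + 2 * ⟪f a - f b, deriv f b⟫ / ‖f a - f b‖ ^ 2) b := by
  have hd : a - b ≠ 0 := sub_ne_zero.mpr hab
  have hg : ‖f a - f b‖ ≠ 0 := norm_ne_zero_iff.mpr (sub_ne_zero.mpr hfab)
  have h := ((((hasDerivAt_id' b).const_sub a).fun_pow 2).fun_div
    (hb.hasDerivAt.const_sub (f a)).norm_sq (pow_ne_zero 2 hg)).log
    (div_ne_zero (pow_ne_zero 2 hd) (pow_ne_zero 2 hg))
  convert h using 1
  rw [inner_neg_right]
  field_simp
  ring

theorem hasDerivAt_log_sq_sub_div_norm_sub_sq_left (ha : DifferentiableAt ℝ f a)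
    (hab : a ≠ b) (hfab : f a ≠ f b) :
    HasDerivAt (fun t => log ((t - b) ^ 2 / ‖f t - f b‖ ^ 2))
      (2 / (a - b) - 2 * ⟪f a - f b, deriv f a⟫ / ‖f a - f b‖ ^ 2) a := by
  have h := hasDerivAt_log_sq_sub_div_norm_sub_sq_right ha hab.symm hfab.symm
  convert h using 1
  · funext t
    rw [sub_sq_comm, norm_sub_rev]
  · rw [norm_sub_rev, ← neg_sub (f a), inner_neg_left, ← neg_sub a, div_neg]
    ring

theorem hasDerivAt_inner_sub_div_norm_sub_sq (ha : DifferentiableAt ℝ f a) (hab : f a ≠ f b)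
    (v : E) :
    HasDerivAt (fun s => ⟪f s - f b, v⟫ / ‖f s - f b‖ ^ 2)
      ((⟪deriv f a, v⟫ * ‖f a - f b‖ ^ 2 - 2 * ⟪f a - f b, v⟫ * ⟪f a - f b, deriv f a⟫)
        / ‖f a - f b‖ ^ 4) a := by
  have hg : ‖f a - f b‖ ≠ 0 := norm_ne_zero_iff.mpr (sub_ne_zero.mpr hab)
  have hsub := ha.hasDerivAt.sub_const (f b)
  have hnum := hsub.inner ℝ (hasDerivAt_const a v)
  rw [inner_zero_right, zero_add] at hnum
  exact (hnum.div hsub.norm_sq (by positivity)).congr_deriv (by ring)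

theorem deriv_deriv_log_norm_sub_sq (hf : Differentiable ℝ f) (hab : f a ≠ f b) :
    deriv (fun s => deriv (fun t => log (‖f s - f t‖ ^ 2)) b) a
      = -2 * ((⟪deriv f a, deriv f b⟫ * ‖f a - f b‖ ^ 2
          - 2 * ⟪f a - f b, deriv f b⟫ * ⟪f a - f b, deriv f a⟫) / ‖f a - f b‖ ^ 4) := by
  have hev : (fun s => deriv (fun t => log (‖f s - f t‖ ^ 2)) b) =ᶠ[𝓝 a]
      fun s => -2 * (⟪f s - f b, deriv f b⟫ / ‖f s - f b‖ ^ 2) := by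
    filter_upwards [(hf a).continuousAt.eventually_ne hab] with s hs
    rw [(hasDerivAt_log_norm_sub_sq_right (hf b) hs).deriv, mul_div_assoc]
  rw [hev.deriv_eq]
  exact ((hasDerivAt_inner_sub_div_norm_sub_sq (hf a) hab _).const_mul (-2)).deriv

theorem deriv_deriv_log_sq_sub_div_norm_sub_sq (hf : Differentiable ℝ f) (hab : a ≠ b)
    (hfab : f a ≠ f b) :
    deriv (fun s => deriv (fun t => log ((s - t) ^ 2 / ‖f s - f t‖ ^ 2)) b) a
      = 2 / (a - b) ^ 2 + 2 * ((⟪deriv f a, deriv f b⟫ * ‖f a - f b‖ ^ 2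
          - 2 * ⟪f a - f b, deriv f b⟫ * ⟪f a - f b, deriv f a⟫) / ‖f a - f b‖ ^ 4) := by
  have hev : (fun s => deriv (fun t => log ((s - t) ^ 2 / ‖f s - f t‖ ^ 2)) b) =ᶠ[𝓝 a]
      fun s => -2 / (s - b) + 2 * (⟪f s - f b, deriv f b⟫ / ‖f s - f b‖ ^ 2) := by
    filter_upwards [(hf a).continuousAt.eventually_ne hfab, eventually_ne_nhds hab]
      with s hfs hs
    rw [(hasDerivAt_log_sq_sub_div_norm_sub_sq_right (hf b) hs hfs).deriv, mul_div_assoc]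
  have hpole : HasDerivAt (fun s => -2 / (s - b)) (2 / (a - b) ^ 2) a :=
    ((hasDerivAt_const a (-2 : ℝ)).fun_div ((hasDerivAt_id' a).sub_const b)
      (sub_ne_zero.mpr hab)).congr_deriv (by ring)
  rw [hev.deriv_eq]
  exact (hpole.add ((hasDerivAt_inner_sub_div_norm_sub_sq (hf a) hfab _).const_mul 2)).deriv

end ChordCalculus

/-- The identity `2M₁(f) = 2M₀(f) − 2∂²X/(∂s1∂s2) + (∂X/∂s1)(∂X/∂s2)
  + (2/Δs)(∂X/∂s1 − ∂X/∂s2)` for a `C²` embedded arc-length parametrized curve,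
with `X = log(Δs²/‖Δf‖²)` and `cos φ = (‖Δf‖²/2)·∂²/(∂s1∂s2) log‖Δf‖²`. -/
theorem stmt_4 {n : ℕ} (f : ℝ → EuclideanSpace ℝ (Fin n))
    (hf : ContDiff ℝ 2 f) (hunit : ∀ s, ‖deriv f s‖ = 1)
    (s1 s2 : ℝ) (hs : s1 ≠ s2) (hne : f s1 ≠ f s2) :
    2 * (‖deriv f s1 - deriv f s2‖ ^ 2 / (2 * ‖f s1 - f s2‖ ^ 2))
      = 2 * ((1 - (‖f s1 - f s2‖ ^ 2 / 2) *
            deriv (fun a => deriv (fun b => Real.log (‖f a - f b‖ ^ 2)) s2) s1)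
              / ‖f s1 - f s2‖ ^ 2)
        - 2 * deriv (fun a =>
            deriv (fun b => Real.log ((a - b) ^ 2 / ‖f a - f b‖ ^ 2)) s2) s1
        + (deriv (fun a => Real.log ((a - s2) ^ 2 / ‖f a - f s2‖ ^ 2)) s1)
          * (deriv (fun b => Real.log ((s1 - b) ^ 2 / ‖f s1 - f b‖ ^ 2)) s2)
        + (2 / (s1 - s2)) *
            ((deriv (fun a => Real.log ((a - s2) ^ 2 / ‖f a - f s2‖ ^ 2)) s1)
              - (deriv (fun b => Real.log ((s1 - b) ^ 2 / ‖f s1 - f b‖ ^ 2)) s2)) := by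
  have hdiff : Differentiable ℝ f := hf.differentiable (by norm_num)
  rw [deriv_deriv_log_norm_sub_sq hdiff hne, deriv_deriv_log_sq_sub_div_norm_sub_sq hdiff hs hne,
    (hasDerivAt_log_sq_sub_div_norm_sub_sq_left (hdiff s1) hs hne).deriv,
    (hasDerivAt_log_sq_sub_div_norm_sub_sq_right (hdiff s2) hs hne).deriv,
    norm_sub_sq_real, hunit, hunit]
  have hd : s1 - s2 ≠ 0 := sub_ne_zero.mpr hs
  have hg : ‖f s1 - f s2‖ ≠ 0 := norm_ne_zero_iff.mpr (sub_ne_zero.mpr hne)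
  field_simp
  ring
end

section
/- For a C² embedded arc-length parametrized curve f and for 0 < |s1 − s2| < L/2, the identity 2(M(f) − M₀(f)) = −∂²X/(∂s1∂s2) holds, where M(f) = 1/‖Δf‖² − 1/|Δs|², M₀(f) = (1−cos φ)/‖Δf‖² with cos φ = (‖Δf‖²/2)·∂²/(∂s1∂s2) log‖Δf‖², and X = log(|Δs|²/‖Δf‖²) with Δs = s1 − s2. -/
/-!
Embeddedness gives `f s1 ≠ f s2`, so near `(s1, s2)` both `Δs` and `Δf` are nonzero and
`X = log Δs² - log ‖Δf‖²`. The mixed derivative of `log Δs²` is `2 / Δs²`, while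
`M - M₀ = ½ ∂²log ‖Δf‖² / ∂s1∂s2 - 1 / Δs²`; the identity is then algebra.
-/

open Filter Topology
open scoped RealInnerProductSpace

lemma apply_ne_apply_of_abs_sub_lt {α : Type*} {f : ℝ → α} {L : ℝ}
    (hemb : ∀ a b : ℝ, f a = f b → ∃ k : ℤ, a - b = k * L) {a b : ℝ} (hab : a ≠ b)
    (hlt : |a - b| < L) : f a ≠ f b := by
  intro h
  obtain ⟨k, hk⟩ := hemb a b h
  have hk0 : k ≠ 0 := by rintro rfl; simp [sub_eq_zero, hab] at hk
  have : |L| ≤ |a - b| := by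
    rw [hk, abs_mul]
    exact le_mul_of_one_le_left (abs_nonneg L) (by exact_mod_cast Int.one_le_abs hk0)
  linarith [le_abs_self L]

lemma deriv_deriv_congr_of_eventuallyEq {F G : ℝ → ℝ → ℝ} {a b : ℝ}
    (h : Function.uncurry F =ᶠ[𝓝 (a, b)] Function.uncurry G) :
    deriv (fun a => deriv (fun b => F a b) b) a = deriv (fun a => deriv (fun b => G a b) b) a := by
  refine EventuallyEq.deriv_eq ?_
  filter_upwards [h.curry_nhds] with a' ha'
  exact EventuallyEq.deriv_eq ha'

lemma deriv_deriv_sub {F G : ℝ → ℝ → ℝ} {a b : ℝ}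
    (hF : ∀ᶠ a' in 𝓝 a, DifferentiableAt ℝ (fun b => F a' b) b)
    (hG : ∀ᶠ a' in 𝓝 a, DifferentiableAt ℝ (fun b => G a' b) b)
    (hF' : DifferentiableAt ℝ (fun a => deriv (fun b => F a b) b) a)
    (hG' : DifferentiableAt ℝ (fun a => deriv (fun b => G a b) b) a) :
    deriv (fun a => deriv (fun b => F a b - G a b) b) a
      = deriv (fun a => deriv (fun b => F a b) b) a
        - deriv (fun a => deriv (fun b => G a b) b) a := by
  rw [← deriv_sub hF' hG']
  refine EventuallyEq.deriv_eq ?_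
  filter_upwards [hF, hG] with a' hFa hGa
  exact deriv_sub hFa hGa

lemma hasDerivAt_log_sq_sub {a b : ℝ} (h : a ≠ b) :
    HasDerivAt (fun b => Real.log ((a - b) ^ 2)) (-2 / (a - b)) b := by
  have hsub : a - b ≠ 0 := sub_ne_zero.mpr h
  simp_rw [Real.log_pow]
  refine ((((hasDerivAt_id' b).const_sub a).log hsub).const_mul ((2 : ℕ) : ℝ)).congr_deriv ?_
  push_cast
  ring

lemma hasDerivAt_deriv_log_sq_sub {a b : ℝ} (h : a ≠ b) :
    HasDerivAt (fun a => deriv (fun b => Real.log ((a - b) ^ 2)) b) (2 / (a - b) ^ 2) a := by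
  have hsub : a - b ≠ 0 := sub_ne_zero.mpr h
  have hexpl : HasDerivAt (fun a => -2 / (a - b)) (2 / (a - b) ^ 2) a := by
    refine ((hasDerivAt_const a (-2 : ℝ)).div ((hasDerivAt_id' a).sub_const b) hsub).congr_deriv
      (by ring)
  refine hexpl.congr_of_eventuallyEq ?_
  filter_upwards [continuousAt_id.eventually_ne h] with a' ha'
  exact (hasDerivAt_log_sq_sub ha').deriv

lemma log_div_normSq_sub_eventuallyEq {E : Type*} [NormedAddCommGroup E] {f : ℝ → E} {a b : ℝ}
    (ha : ContinuousAt f a) (hb : ContinuousAt f b) (hab : a ≠ b) (h : f a ≠ f b) :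
    Function.uncurry (fun a b => Real.log ((a - b) ^ 2 / ‖f a - f b‖ ^ 2)) =ᶠ[𝓝 (a, b)]
      Function.uncurry (fun a b => Real.log ((a - b) ^ 2) - Real.log (‖f a - f b‖ ^ 2)) := by
  have hΔs : ContinuousAt (fun p : ℝ × ℝ => p.1 - p.2) (a, b) := by fun_prop
  have hΔf : ContinuousAt (fun p : ℝ × ℝ => f p.1 - f p.2) (a, b) :=
    (ha.comp continuousAt_fst).sub (hb.comp continuousAt_snd)
  filter_upwards [hΔs.eventually_ne (sub_ne_zero.mpr hab),
    hΔf.eventually_ne (sub_ne_zero.mpr h)] with ⟨a', b'⟩ hab' hfab'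
  exact Real.log_div (pow_ne_zero 2 hab') (pow_ne_zero 2 (norm_ne_zero_iff.mpr hfab'))

section

variable {E : Type*} [NormedAddCommGroup E] [InnerProductSpace ℝ E] {f : ℝ → E}

lemma hasDerivAt_log_normSq_sub (a : ℝ) {b : ℝ} (hb : DifferentiableAt ℝ f b)
    (h : f a ≠ f b) :
    HasDerivAt (fun b => Real.log (‖f a - f b‖ ^ 2))
      (-2 * ⟪f a - f b, deriv f b⟫ / ‖f a - f b‖ ^ 2) b := by
  have hpos : ‖f a - f b‖ ^ 2 ≠ 0 := by simpa [sub_eq_zero] using h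
  convert (hb.hasDerivAt.const_sub (f a)).norm_sq.log hpos using 2
  rw [inner_neg_right]
  ring

lemma differentiableAt_deriv_log_normSq_sub {a b : ℝ} (ha : DifferentiableAt ℝ f a)
    (hb : DifferentiableAt ℝ f b) (h : f a ≠ f b) :
    DifferentiableAt ℝ (fun a => deriv (fun b => Real.log (‖f a - f b‖ ^ 2)) b) a := by
  have hexpl : DifferentiableAt ℝ
      (fun a => -2 * ⟪f a - f b, deriv f b⟫ / ‖f a - f b‖ ^ 2) a := by
    have hpos : ‖f a - f b‖ ^ 2 ≠ 0 := by simpa [sub_eq_zero] using h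
    have hsub := ha.sub_const (f b)
    exact ((hsub.inner ℝ (differentiableAt_const _)).const_mul _).div (hsub.norm_sq ℝ) hpos
  refine hexpl.congr_of_eventuallyEq ?_
  filter_upwards [ha.continuousAt.eventually_ne h] with a' ha'
  exact (hasDerivAt_log_normSq_sub a' hb ha').deriv


lemma deriv_deriv_log_div_normSq_sub {a b : ℝ} (ha : DifferentiableAt ℝ f a)
    (hb : DifferentiableAt ℝ f b) (hab : a ≠ b) (h : f a ≠ f b) :
    deriv (fun a => deriv (fun b => Real.log ((a - b) ^ 2 / ‖f a - f b‖ ^ 2)) b) a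
      = 2 / (a - b) ^ 2 - deriv (fun a => deriv (fun b => Real.log (‖f a - f b‖ ^ 2)) b) a := by
  have hF : ∀ᶠ a' in 𝓝 a, DifferentiableAt ℝ (fun b => Real.log ((a' - b) ^ 2)) b := by
    filter_upwards [continuousAt_id.eventually_ne hab] with a' ha'
    exact (hasDerivAt_log_sq_sub ha').differentiableAt
  have hG : ∀ᶠ a' in 𝓝 a,
      DifferentiableAt ℝ (fun b => Real.log (‖f a' - f b‖ ^ 2)) b := by
    filter_upwards [ha.continuousAt.eventually_ne h] with a' ha'
    exact (hasDerivAt_log_normSq_sub a' hb ha').differentiableAt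
  rw [deriv_deriv_congr_of_eventuallyEq
      (log_div_normSq_sub_eventuallyEq ha.continuousAt hb.continuousAt hab h),
    deriv_deriv_sub hF hG (hasDerivAt_deriv_log_sq_sub hab).differentiableAt
      (differentiableAt_deriv_log_normSq_sub ha hb h),
    (hasDerivAt_deriv_log_sq_sub hab).deriv]

end

theorem stmt_8_general {n : ℕ} (f : ℝ → EuclideanSpace ℝ (Fin n)) (L : ℝ)
    (hf : ContDiff ℝ 2 f)
    (hemb : ∀ a b : ℝ, f a = f b → ∃ k : ℤ, a - b = k * L)
    (s1 s2 : ℝ) (h1 : 0 < |s1 - s2|) (h2 : |s1 - s2| < L / 2) :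
    2 * ((1 / ‖f s1 - f s2‖ ^ 2 - 1 / (s1 - s2) ^ 2)
        - (1 - (‖f s1 - f s2‖ ^ 2 / 2) *
            deriv (fun a => deriv (fun b => Real.log (‖f a - f b‖ ^ 2)) s2) s1)
              / ‖f s1 - f s2‖ ^ 2)
      = - deriv (fun a =>
          deriv (fun b => Real.log ((a - b) ^ 2 / ‖f a - f b‖ ^ 2)) s2) s1 := by
  have hd : Differentiable ℝ f := hf.differentiable two_ne_zero
  have hs : s1 ≠ s2 := sub_ne_zero.mp (abs_pos.mp h1)
  have hfs : f s1 ≠ f s2 := apply_ne_apply_of_abs_sub_lt hemb hs (by linarith)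
  rw [deriv_deriv_log_div_normSq_sub (hd s1) (hd s2) hs hfs]
  have hΔf : ‖f s1 - f s2‖ ≠ 0 := norm_ne_zero_iff.mpr (sub_ne_zero.mpr hfs)
  have hΔs : s1 - s2 ≠ 0 := sub_ne_zero.mpr hs
  field_simp
  ring

/-- For a `C²` embedded closed curve of length `L` parametrized by arc length and
`0 < |s1 − s2| < L/2`, one has `2(M(f) − M₀(f)) = −∂²X/(∂s1∂s2)`. -/
theorem stmt_8 {n : ℕ} (f : ℝ → EuclideanSpace ℝ (Fin n)) (L : ℝ) (hL : 0 < L)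
    (hf : ContDiff ℝ 2 f) (hunit : ∀ s, ‖deriv f s‖ = 1)
    (hper : ∀ s, f (s + L) = f s)
    (hemb : ∀ a b : ℝ, f a = f b → ∃ k : ℤ, a - b = k * L)
    (s1 s2 : ℝ) (h1 : 0 < |s1 - s2|) (h2 : |s1 - s2| < L / 2) :
    2 * ((1 / ‖f s1 - f s2‖ ^ 2 - 1 / (s1 - s2) ^ 2)
        - (1 - (‖f s1 - f s2‖ ^ 2 / 2) *
            deriv (fun a => deriv (fun b => Real.log (‖f a - f b‖ ^ 2)) s2) s1)
              / ‖f s1 - f s2‖ ^ 2)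
      = - deriv (fun a =>
          deriv (fun b => Real.log ((a - b) ^ 2 / ‖f a - f b‖ ^ 2)) s2) s1 :=
  stmt_8_general f L hf hemb s1 s2 h1 h2
end

section
/- For an arc-length parametrized closed curve f of total length L with unit tangent τ, for any a ∈ (0, L/2] and any s, one has |Δs|²/‖Δf‖² − 1 ≤ (1/(2‖f(s+a)−f(s)‖²)) ∫ₛ^{s+a} ∫ₛ^{s+a} ‖τ(u) − τ(v)‖² du dv with Δs = a, Δf = f(s+a) − f(s); more precisely a² − ‖f(s+a)−f(s)‖² = (1/2)∫ₛ^{s+a}∫ₛ^{s+a} ‖τ(u)−τ(v)‖² du dv. -/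
/-!
Expanding `‖τ u - τ v‖² = ‖τ u‖² - 2⟪τ u, τ v⟫ + ‖τ v‖²` and integrating over the square, the
cross term becomes `‖∫ τ‖² = ‖f (s + a) - f s‖²` by the fundamental theorem of calculus, while unit
speed turns the square terms into `a²`. The inequality is then the identity divided by
`‖Δf‖²`, up to replacing `1` by `‖Δf‖² / ‖Δf‖² ≤ 1` (which is `0` when `Δf = 0`).
-/

open MeasureTheory
open scoped RealInnerProductSpace

section

variable {E : Type*} [NormedAddCommGroup E] [InnerProductSpace ℝ E] [CompleteSpace E]
  {τ : ℝ → E} {a b : ℝ}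

theorem intervalIntegral_inner_left (hτ : IntervalIntegrable τ volume a b) (x : E) :
    ∫ v in a..b, ⟪x, τ v⟫ = ⟪x, ∫ v in a..b, τ v⟫ :=
  (innerSL ℝ x).intervalIntegral_comp_comm hτ

theorem intervalIntegral_inner_right (hτ : IntervalIntegrable τ volume a b) (x : E) :
    ∫ v in a..b, ⟪τ v, x⟫ = ⟪∫ v in a..b, τ v, x⟫ := by
  simpa only [real_inner_comm x] using intervalIntegral_inner_left hτ x

theorem integral_integral_norm_sub_sq (hτ : Continuous τ) :
    ∫ u in a..b, ∫ v in a..b, ‖τ u - τ v‖ ^ 2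
      = 2 * (b - a) * (∫ u in a..b, ‖τ u‖ ^ 2) - 2 * ‖∫ u in a..b, τ u‖ ^ 2 := by
  have hint {g : ℝ → ℝ} (hg : Continuous g) : IntervalIntegrable g volume a b :=
    hg.intervalIntegrable a b
  have inner_integral (u : ℝ) : ∫ v in a..b, ‖τ u - τ v‖ ^ 2
      = (b - a) * ‖τ u‖ ^ 2 - 2 * ⟪τ u, ∫ v in a..b, τ v⟫ + ∫ v in a..b, ‖τ v‖ ^ 2 := by
    simp_rw [norm_sub_sq_real]
    rw [intervalIntegral.integral_add (hint (by fun_prop)) (hint (by fun_prop)),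
      intervalIntegral.integral_sub (hint (by fun_prop)) (hint (by fun_prop)),
      intervalIntegral.integral_const, intervalIntegral.integral_const_mul,
      intervalIntegral_inner_left (hτ.intervalIntegrable a b), smul_eq_mul]
  simp_rw [inner_integral]
  rw [intervalIntegral.integral_add (hint (by fun_prop)) (hint (by fun_prop)),
    intervalIntegral.integral_sub (hint (by fun_prop)) (hint (by fun_prop)),
    intervalIntegral.integral_const_mul, intervalIntegral.integral_const,
    intervalIntegral.integral_const_mul, intervalIntegral_inner_right (hτ.intervalIntegrable a b),
    real_inner_self_eq_norm_sq, smul_eq_mul]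
  ring

end

theorem stmt_11_general {n : ℕ} (f : ℝ → EuclideanSpace ℝ (Fin n))
    (hf : ContDiff ℝ 1 f) (hunit : ∀ s, ‖deriv f s‖ = 1)
    (a s : ℝ) :
    a ^ 2 - ‖f (s + a) - f s‖ ^ 2
        = (1 / 2) * ∫ u in s..(s + a), ∫ v in s..(s + a),
            ‖deriv f u - deriv f v‖ ^ 2 ∧
    a ^ 2 / ‖f (s + a) - f s‖ ^ 2 - 1
        ≤ (1 / (2 * ‖f (s + a) - f s‖ ^ 2)) *
            ∫ u in s..(s + a), ∫ v in s..(s + a), ‖deriv f u - deriv f v‖ ^ 2 := by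
  have hτ : Continuous (deriv f) := hf.continuous_deriv le_rfl
  have hchord : ∫ u in s..(s + a), deriv f u = f (s + a) - f s :=
    intervalIntegral.integral_deriv_eq_sub
      (fun x _ => (hf.differentiable one_ne_zero).differentiableAt) (hτ.intervalIntegrable _ _)
  have hdouble : ∫ u in s..(s + a), ∫ v in s..(s + a), ‖deriv f u - deriv f v‖ ^ 2
      = 2 * (a ^ 2 - ‖f (s + a) - f s‖ ^ 2) := by
    rw [integral_integral_norm_sub_sq hτ, hchord]
    simp only [hunit, one_pow, intervalIntegral.integral_const, smul_eq_mul, mul_one,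
      add_sub_cancel_left]
    ring
  refine ⟨by rw [hdouble]; ring, ?_⟩
  set D := ‖f (s + a) - f s‖ ^ 2
  calc a ^ 2 / D - 1 ≤ a ^ 2 / D - D / D := by gcongr; exact div_self_le_one D
    _ = (1 / (2 * D)) * (2 * (a ^ 2 - D)) := by ring
    _ = _ := by rw [hdouble]

/-- For an arc-length parametrized closed curve of length `L`, for `a ∈ (0, L/2]`,
`a² − ‖f(s+a) − f(s)‖² = (1/2)∫∫ ‖τ(u) − τ(v)‖² du dv`, and consequently
`|Δs|²/‖Δf‖² − 1 ≤ (1/(2‖Δf‖²))∫∫ ‖τ(u) − τ(v)‖² du dv`. -/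
theorem stmt_11 {n : ℕ} (f : ℝ → EuclideanSpace ℝ (Fin n)) (L : ℝ) (hL : 0 < L)
    (hf : ContDiff ℝ 1 f) (hunit : ∀ s, ‖deriv f s‖ = 1)
    (hper : ∀ s, f (s + L) = f s)
    (hemb : ∀ a b : ℝ, f a = f b → ∃ k : ℤ, a - b = k * L)
    (a s : ℝ) (ha0 : 0 < a) (ha1 : a ≤ L / 2) :
    a ^ 2 - ‖f (s + a) - f s‖ ^ 2
        = (1 / 2) * ∫ u in s..(s + a), ∫ v in s..(s + a),
            ‖deriv f u - deriv f v‖ ^ 2 ∧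
    a ^ 2 / ‖f (s + a) - f s‖ ^ 2 - 1
        ≤ (1 / (2 * ‖f (s + a) - f s‖ ^ 2)) *
            ∫ u in s..(s + a), ∫ v in s..(s + a), ‖deriv f u - deriv f v‖ ^ 2 :=
  stmt_11_general f hf hunit a s
end

section
/- Invariance of 𝒞 under inversion: if I(x) = x/‖x‖² is the inversion in the unit sphere and f is a C¹ curve avoiding the origin, then 𝒞(I∘f)(θ1,θ2) = 𝒞(f)(θ1,θ2), where 𝒞(f) = ‖ḟ(θ1)‖·‖ḟ(θ2)‖/‖f(θ1)−f(θ2)‖². This uses ‖I(x)−I(y)‖ = ‖x−y‖/(‖x‖·‖y‖) and ‖D I(x) v‖ = ‖v‖/‖x‖². -/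
/-!
The derivative of the inversion `I = inversion 0 1` at `x ≠ 0` is `‖x‖⁻²` times a reflection,
so `I ∘ f` has speed `‖ḟ(θ)‖ / ‖f(θ)‖²`, while chords transform as
`‖I x - I y‖ = ‖x - y‖ / (‖x‖ ‖y‖)`. The factors `‖f(θ₁)‖⁻² ‖f(θ₂)‖⁻²` therefore cancel
between numerator and denominator of `𝒞`.
-/

open EuclideanGeometry

section

variable {F : Type*} [NormedAddCommGroup F] [InnerProductSpace ℝ F]

theorem inversion_zero_one_apply (x : F) : inversion 0 1 x = (‖x‖ ^ 2)⁻¹ • x := by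
  simp [inversion]

theorem norm_deriv_inversion_comp {c : F} {R : ℝ} {f : ℝ → F} {t : ℝ}
    (hf : DifferentiableAt ℝ f t) (ht : f t ≠ c) :
    ‖deriv (fun s => inversion c R (f s)) t‖ = (R / dist (f t) c) ^ 2 * ‖deriv f t‖ := by
  have h : HasDerivAt (fun s => inversion c R (f s)) _ t :=
    (hasFDerivAt_inversion ht).comp_hasDerivAt t hf.hasDerivAt
  rw [h.deriv, FunLike.coe_smul, Pi.smul_apply, norm_smul, norm_pow, Real.norm_eq_abs, sq_abs]
  simp only [ContinuousLinearEquiv.coe_coe, LinearIsometryEquiv.coe_toContinuousLinearEquiv,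
    LinearIsometryEquiv.norm_map]

end

theorem stmt_15_general {n : ℕ} (f : ℝ → EuclideanSpace ℝ (Fin n))
    (hf : Differentiable ℝ f) (h0 : ∀ θ, f θ ≠ 0) (θ1 θ2 : ℝ) :
    ‖deriv (fun θ => (‖f θ‖ ^ 2)⁻¹ • f θ) θ1‖
        * ‖deriv (fun θ => (‖f θ‖ ^ 2)⁻¹ • f θ) θ2‖
        / ‖(‖f θ1‖ ^ 2)⁻¹ • f θ1 - (‖f θ2‖ ^ 2)⁻¹ • f θ2‖ ^ 2
      = ‖deriv f θ1‖ * ‖deriv f θ2‖ / ‖f θ1 - f θ2‖ ^ 2 := by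
  simp only [← inversion_zero_one_apply, ← dist_eq_norm]
  rw [norm_deriv_inversion_comp (hf θ1) (h0 θ1), norm_deriv_inversion_comp (hf θ2) (h0 θ2),
    dist_inversion_inversion (h0 θ1) (h0 θ2)]
  set k := (dist (f θ1) 0 * dist (f θ2) 0)⁻¹ ^ 2
  have hk : k ≠ 0 := by simp [k, h0]
  calc _ = k * (‖deriv f θ1‖ * ‖deriv f θ2‖) / (k * dist (f θ1) (f θ2) ^ 2) := by ring
    _ = _ := mul_div_mul_left _ _ hk

/-- The density `𝒞(f) = ‖ḟ(θ1)‖‖ḟ(θ2)‖/‖f(θ1)−f(θ2)‖²` is invariant under the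
inversion `I(x) = x/‖x‖²` in the unit sphere, for curves avoiding the origin. -/
theorem stmt_15 {n : ℕ} (f : ℝ → EuclideanSpace ℝ (Fin n))
    (hf : Differentiable ℝ f) (h0 : ∀ θ, f θ ≠ 0) (himm : ∀ θ, deriv f θ ≠ 0)
    (θ1 θ2 : ℝ) (hne : f θ1 ≠ f θ2) :
    ‖deriv (fun θ => (‖f θ‖ ^ 2)⁻¹ • f θ) θ1‖
        * ‖deriv (fun θ => (‖f θ‖ ^ 2)⁻¹ • f θ) θ2‖
        / ‖(‖f θ1‖ ^ 2)⁻¹ • f θ1 - (‖f θ2‖ ^ 2)⁻¹ • f θ2‖ ^ 2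
      = ‖deriv f θ1‖ * ‖deriv f θ2‖ / ‖f θ1 - f θ2‖ ^ 2 :=
  stmt_15_general f hf h0 θ1 θ2
end

section
/- For a C² immersed curve f (general parametrization) with f(θ1) ≠ f(θ2), the cosine of the conformal angle satisfies cos φ = −(1/(2𝒞(f)))·∂²/(∂θ1∂θ2) log 𝒞(f), where cos φ = (‖Δf‖²/(2‖ḟ(θ1)‖‖ḟ(θ2)‖))·∂²/(∂θ1∂θ2) log‖Δf‖² and 𝒞(f) = ‖ḟ(θ1)‖‖ḟ(θ2)‖/‖Δf‖². -/
/-!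
Off the diagonal, `log 𝒞(f)(θ₁, θ₂) = log ‖ḟ(θ₁)‖ + log ‖ḟ(θ₂)‖ - log ‖Δf‖²`. The first two
summands each depend on one variable only, so their mixed partial derivative vanishes and
`∂²/∂θ₁∂θ₂ log 𝒞(f) = -∂²/∂θ₁∂θ₂ log ‖Δf‖²`; the identity is then algebra.
-/

open Filter Topology Real

section MixedDeriv

variable {𝕜 F : Type*} [NontriviallyNormedField 𝕜] [NormedAddCommGroup F] [NormedSpace 𝕜 F]

theorem deriv_deriv_eq_neg_of_eventuallyEq_add_sub {g h : 𝕜 → 𝕜 → F} {u v : 𝕜 → F} {x y : 𝕜}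
    (hg : ∀ᶠ p in 𝓝 (x, y), g p.1 p.2 = u p.1 + v p.2 - h p.1 p.2)
    (hv : DifferentiableAt 𝕜 v y) (hh : ∀ᶠ a in 𝓝 x, DifferentiableAt 𝕜 (h a) y) :
    deriv (fun a => deriv (g a) y) x = -deriv (fun a => deriv (h a) y) x := by
  have hgy : (fun a => deriv (g a) y) =ᶠ[𝓝 x] fun a => deriv v y - deriv (h a) y := by
    filter_upwards [hg.curry_nhds, hh] with a hga hha
    have hga : g a =ᶠ[𝓝 y] fun b => u a + (v b - h a b) := by
      filter_upwards [hga] with b hb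
      rw [hb, add_sub_assoc]
    rw [hga.deriv_eq, deriv_const_add]
    exact deriv_sub hv hha
  rw [hgy.deriv_eq, deriv_const_sub]

end MixedDeriv

/-- For a `C²` immersed curve, the cosine of the conformal angle satisfies
`cos φ = −(1/(2𝒞(f)))·∂²/(∂θ1∂θ2) log 𝒞(f)`. -/
theorem stmt_16 {n : ℕ} (f : ℝ → EuclideanSpace ℝ (Fin n))
    (hf : ContDiff ℝ 2 f) (himm : ∀ θ, deriv f θ ≠ 0)
    (θ1 θ2 : ℝ) (hne : f θ1 ≠ f θ2) :
    (‖f θ1 - f θ2‖ ^ 2 / (2 * ‖deriv f θ1‖ * ‖deriv f θ2‖)) *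
        deriv (fun a => deriv (fun b => Real.log (‖f a - f b‖ ^ 2)) θ2) θ1
      = -(1 / (2 * (‖deriv f θ1‖ * ‖deriv f θ2‖ / ‖f θ1 - f θ2‖ ^ 2))) *
          deriv (fun a => deriv (fun b =>
            Real.log (‖deriv f a‖ * ‖deriv f b‖ / ‖f a - f b‖ ^ 2)) θ2) θ1 := by
  have hfd : Differentiable ℝ f := hf.differentiable (by norm_num)
  have hfc : Continuous f := hfd.continuous
  have hΔ : ∀ᶠ p in 𝓝 (θ1, θ2), f p.1 - f p.2 ≠ 0 :=
    ContinuousAt.eventually_ne (by fun_prop) (sub_ne_zero.mpr hne)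
  have hN : ∀ θ, ‖deriv f θ‖ ≠ 0 := fun θ => norm_ne_zero_iff.mpr (himm θ)
  rw [deriv_deriv_eq_neg_of_eventuallyEq_add_sub
    (g := fun a b => log (‖deriv f a‖ * ‖deriv f b‖ / ‖f a - f b‖ ^ 2))
    (u := fun a => log ‖deriv f a‖) (v := fun b => log ‖deriv f b‖)
    (h := fun a b => log (‖f a - f b‖ ^ 2))]
  · have hΔ₀ : ‖f θ1 - f θ2‖ ^ 2 ≠ 0 := by simpa using sub_ne_zero.mpr hne
    field_simp [hN θ1, hN θ2]
  · filter_upwards [hΔ] with p hp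
    have hp₀ : ‖f p.1 - f p.2‖ ^ 2 ≠ 0 := by simpa using hp
    rw [log_div (mul_ne_zero (hN _) (hN _)) hp₀, log_mul (hN _) (hN _)]
  · exact ((hf.differentiable_deriv_two θ2).norm ℝ (himm θ2)).log (hN θ2)
  · filter_upwards [hfc.continuousAt.eventually_ne hne] with a ha
    exact (((differentiableAt_const (f a)).sub (hfd θ2)).norm_sq ℝ).log
      (by simpa [sub_eq_zero] using ha)
end
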